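/- arXiv:math/0605193 — 3 statements merged into one kernel-verified Lean document; each statement's English description precedes it below -/
import Mathlib

section
/- Let G ⊆ G' be an inclusion of graded algebras without zero divisors (graded by an ordered abelian group), and let x be a homogeneous element of G' that is algebraic over G. Then x is integral over the saturation G* of G, where G* = { g/h : g, h ∈ G, h homogeneous, h ≠ 0 }. -/
/-!
Write `x ∈ 𝒜 d` and let `∑ aⱼ xʲ = 0` with `a_{j₀}` having a nonzero component of degree `e`.
Taking the component of degree `e + j₀ d` of the relation gives a new relation `∑ bⱼ xʲ = 0`
whose coefficients `bⱼ = (aⱼ)_{e + j₀ d - j d}` are homogeneous, lie in `G` (which contains the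
components of its elements) and satisfy `b_{j₀} ≠ 0`. Dividing by the top nonzero coefficient
`bₘ`, which is homogeneous, gives a monic relation over `G*`.
-/

open Finset DirectSum

namespace DirectSum

theorem exists_coe_decompose_ne_zero {ι M σ : Type*} [DecidableEq ι] [AddCommMonoid M]
    [SetLike σ M] [AddSubmonoidClass σ M] (ℳ : ι → σ) [Decomposition ℳ] {a : M} (ha : a ≠ 0) :
    ∃ i, (decompose ℳ a i : M) ≠ 0 := by
  by_contra! h
  exact ha <| (decompose ℳ).injective <| by ext i; simp [h i]

theorem coe_decompose_sum_mul_pow_of_mem {ι A σ : Type*} [AddCommGroup ι] [DecidableEq ι]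
    [Semiring A] [SetLike σ A] [AddSubmonoidClass σ A] (𝒜 : ι → σ) [GradedRing 𝒜]
    {x : A} {d : ι} (hx : x ∈ 𝒜 d) (s : Finset ℕ) (a : ℕ → A) (i : ι) :
    (decompose 𝒜 (∑ j ∈ s, a j * x ^ j) i : A) =
      ∑ j ∈ s, (decompose 𝒜 (a j) (i - j • d) : A) * x ^ j := by
  rw [decompose_sum, DFinsupp.finsetSum_apply, AddSubmonoidClass.coe_finsetSum]
  refine sum_congr rfl fun j _ => ?_
  rw [← coe_decompose_mul_add_of_right_mem 𝒜 (SetLike.pow_mem_graded j hx), sub_add_cancel]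

end DirectSum

theorem exists_top_ne_zero_of_sum_range_mul_pow_eq_zero {R : Type*} [Semiring R] {b : ℕ → R}
    {y : R} {n j₀ : ℕ} (hj₀ : j₀ ≤ n) (hb : b j₀ ≠ 0)
    (h : ∑ j ∈ range (n + 1), b j * y ^ j = 0) :
    ∃ m ≤ n, b m ≠ 0 ∧ ∑ j ∈ range (m + 1), b j * y ^ j = 0 := by
  classical
  set m := Nat.findGreatest (b · ≠ 0) n
  have hmn : m ≤ n := Nat.findGreatest_le n
  refine ⟨m, hmn, Nat.findGreatest_spec (P := (b · ≠ 0)) hj₀ hb, .trans ?_ h⟩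
  refine sum_subset (range_subset_range.mpr (by omega)) fun j hjn hjm => ?_
  rw [mem_range] at hjn hjm
  have hbj : b j = 0 := not_not.mp <|
    Nat.findGreatest_is_greatest (P := (b · ≠ 0)) (n := n) (by omega) (by omega)
  rw [hbj, zero_mul]

theorem pos_of_sum_range_succ_mul_pow_eq_zero {R : Type*} [Semiring R] {b : ℕ → R} {y : R}
    {m : ℕ} (hb : b m ≠ 0) (h : ∑ j ∈ range (m + 1), b j * y ^ j = 0) : 0 < m := by
  rw [Nat.pos_iff_ne_zero]
  rintro rfl
  exact hb (by simpa using h)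

theorem pow_add_sum_range_div_mul_pow_eq_zero {K : Type*} [Field K] {b : ℕ → K} {y : K}
    {m : ℕ} (hb : b m ≠ 0) (h : ∑ j ∈ range (m + 1), b j * y ^ j = 0) :
    y ^ m + ∑ j ∈ range m, b j / b m * y ^ j = 0 := by
  rw [sum_range_succ] at h
  rw [← mul_right_inj' hb, mul_zero, ← h, mul_add, mul_sum]
  simp only [div_mul_eq_mul_div, mul_div_cancel₀ _ hb]
  ring

theorem stmt1_general {ι : Type*} [AddCommGroup ι] [DecidableEq ι]
    {A : Type*} [CommRing A] [IsDomain A]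
    (𝒜 : ι → AddSubgroup A) [GradedRing 𝒜]
    (G : Subring A) (hG : ∀ a ∈ G, ∀ d : ι, (DirectSum.decompose 𝒜 a d : A) ∈ G)
    (x : A) (hx : ∃ d, x ∈ 𝒜 d)
    (halg : ∃ (n : ℕ) (a : ℕ → A), (∀ j ≤ n, a j ∈ G) ∧ (∃ j ≤ n, a j ≠ 0) ∧
      ∑ j ∈ Finset.range (n + 1), a j * x ^ j = 0) :
    ∃ (m : ℕ) (c : ℕ → FractionRing A), 0 < m ∧
      (∀ j < m, ∃ g h : A, g ∈ G ∧ h ∈ G ∧ (∃ d, h ∈ 𝒜 d) ∧ h ≠ 0 ∧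
        c j = algebraMap A (FractionRing A) g / algebraMap A (FractionRing A) h) ∧
      (algebraMap A (FractionRing A) x) ^ m
        + ∑ j ∈ Finset.range m, c j * (algebraMap A (FractionRing A) x) ^ j = 0 := by
  obtain ⟨d, hxd⟩ := hx
  obtain ⟨n, a, haG, ⟨j₀, hj₀n, hj₀⟩, hrel⟩ := halg
  obtain ⟨e, he⟩ := exists_coe_decompose_ne_zero 𝒜 hj₀
  set b : ℕ → A := fun j => decompose 𝒜 (a j) (e + j₀ • d - j • d)
  have hbrel : ∑ j ∈ range (n + 1), b j * x ^ j = 0 := by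
    rw [← coe_decompose_sum_mul_pow_of_mem 𝒜 hxd, hrel, decompose_zero]
    rfl
  have hbj₀ : b j₀ ≠ 0 := by
    show (decompose 𝒜 (a j₀) (e + j₀ • d - j₀ • d) : A) ≠ 0
    rwa [add_sub_cancel_right]
  obtain ⟨m, hmn, hbm, hbrel⟩ :=
    exists_top_ne_zero_of_sum_range_mul_pow_eq_zero hj₀n hbj₀ hbrel
  let φ := algebraMap A (FractionRing A)
  have hφbm : φ (b m) ≠ 0 := (map_ne_zero_iff φ (IsFractionRing.injective A _)).mpr hbm
  have hφrel : ∑ j ∈ range (m + 1), φ (b j) * φ x ^ j = 0 := by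
    simpa only [map_sum, map_mul, map_pow, map_zero] using congrArg φ hbrel
  refine ⟨m, fun j => φ (b j) / φ (b m), pos_of_sum_range_succ_mul_pow_eq_zero hbm hbrel,
    fun j hj => ⟨b j, b m, hG _ (haG j (by omega)) _, hG _ (haG m hmn) _, ⟨_, SetLike.coe_mem _⟩,
      hbm, rfl⟩, pow_add_sum_range_div_mul_pow_eq_zero hφbm hφrel⟩

/-- Let `G ⊆ A` be graded algebras without zero divisors (graded by an ordered abelian
group) and let `x ∈ A` be homogeneous and algebraic over `G`. Then `x` is integral over the
saturation `G* = {g/h : g, h ∈ G, h homogeneous, h ≠ 0}` (inside the fraction field of `A`). -/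
theorem stmt1 {ι : Type*} [AddCommGroup ι] [LinearOrder ι] [IsOrderedAddMonoid ι] [DecidableEq ι]
    {A : Type*} [CommRing A] [IsDomain A]
    (𝒜 : ι → AddSubgroup A) [GradedRing 𝒜]
    (G : Subring A) (hG : ∀ a ∈ G, ∀ d : ι, (DirectSum.decompose 𝒜 a d : A) ∈ G)
    (x : A) (hx : ∃ d, x ∈ 𝒜 d)
    (halg : ∃ (n : ℕ) (a : ℕ → A), (∀ j ≤ n, a j ∈ G) ∧ (∃ j ≤ n, a j ≠ 0) ∧
      ∑ j ∈ Finset.range (n + 1), a j * x ^ j = 0) :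
    ∃ (m : ℕ) (c : ℕ → FractionRing A), 0 < m ∧
      (∀ j < m, ∃ g h : A, g ∈ G ∧ h ∈ G ∧ (∃ d, h ∈ 𝒜 d) ∧ h ≠ 0 ∧
        c j = algebraMap A (FractionRing A) g / algebraMap A (FractionRing A) h) ∧
      (algebraMap A (FractionRing A) x) ^ m
        + ∑ j ∈ Finset.range m, c j * (algebraMap A (FractionRing A) x) ^ j = 0 :=
  stmt1_general 𝒜 G hG x hx halg
end

section
/- Let G ⊆ G' be graded algebras without zero divisors, and let x ∈ G' be homogeneous, satisfying a homogeneous integral relation of degree α over the saturation G* and no algebraic relation of degree less than α over G*. Then every element of the saturation (G[x])* can be written uniquely as a polynomial in x with coefficients in G* of degree strictly less than α; in particular (G[x])* = G*[x]. -/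
/-!
Write `ξ` for the image of `x` in the fraction field and `S` for the `G*`-span of
`1, ξ, …, ξ^(α-1)`. The monic relation makes `S = G*[ξ]`, a ring containing `G[x]`.
For the denominators: `ξ` is algebraic over the fraction field `L` of `G`, so `L[ξ]` is a field
and `h * a = H` for some `a ∈ G[x]` and `0 ≠ H ∈ G`. If `h` is homogeneous of degree `f`, a
nonzero component `H_e` of `H` equals `h * a_(e-f)`, and `a_(e-f) ∈ G[x]` because `G[x]` is a
homogeneous subring; hence `1 / h = a_(e-f) / H_e ∈ S`. Uniqueness of the coefficients is the
absence of relations of degree `< α`.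
-/

open DirectSum

section MonicRelation

variable {R K : Type*} [CommRing R] [CommRing K] [Algebra R K]

theorem adjoin_singleton_eq_span_pow_of_monic_relation {ξ : K} {α : ℕ} {c : ℕ → K}
    (hc : ∀ j < α, c j ∈ (algebraMap R K).range)
    (hξ : ξ ^ α + ∑ j ∈ Finset.range α, c j * ξ ^ j = 0) :
    Subalgebra.toSubmodule (Algebra.adjoin R {ξ}) =
      Submodule.span R (Set.range fun j : Fin α ↦ ξ ^ (j : ℕ)) := by
  set S := Submodule.span R (Set.range fun j : Fin α ↦ ξ ^ (j : ℕ))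
  have hpow : ∀ k, ξ ^ k ∈ S := by
    intro k
    induction k using Nat.strong_induction_on with
    | _ k ih =>
      obtain hk | hk := lt_or_ge k α
      · exact Submodule.subset_span ⟨⟨k, hk⟩, rfl⟩
      have hreduce : ξ ^ k = -∑ j ∈ Finset.range α, c j * ξ ^ (j + (k - α)) := by
        rw [← Nat.add_sub_cancel' hk, pow_add, eq_neg_of_add_eq_zero_left hξ, neg_mul,
          Finset.sum_mul, Nat.add_sub_cancel_left]
        simp only [pow_add, mul_assoc]
      rw [hreduce]
      refine S.neg_mem (S.sum_mem fun j hj ↦ ?_)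
      obtain ⟨r, hr⟩ := hc j (Finset.mem_range.1 hj)
      rw [← hr, ← Algebra.smul_def]
      exact S.smul_mem r (ih _ (by have := Finset.mem_range.1 hj; omega))
  refine le_antisymm ?_ (Submodule.span_le.2 ?_)
  · rw [Algebra.adjoin_eq_span, Submodule.span_le]
    rintro _ hz
    obtain ⟨k, rfl⟩ := Submonoid.mem_closure_singleton.1 hz
    exact hpow k
  · rintro _ ⟨j, rfl⟩
    exact pow_mem (Algebra.self_mem_adjoin_singleton R ξ) _

theorem isIntegral_of_monic_relation {ξ : K} {α : ℕ} {c : ℕ → K}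
    (hc : ∀ j < α, c j ∈ (algebraMap R K).range)
    (hξ : ξ ^ α + ∑ j ∈ Finset.range α, c j * ξ ^ j = 0) : IsIntegral R ξ :=
  IsIntegral.of_mem_of_fg _
    (by
      rw [adjoin_singleton_eq_span_pow_of_monic_relation hc hξ]
      exact Submodule.fg_span (Set.finite_range _))
    ξ (Algebra.self_mem_adjoin_singleton R ξ)

end MonicRelation

theorem linearIndependent_pow_of_forall_sum_ne_zero {K : Type*} [CommRing K] (R : Subring K)
    {ξ : K} {α : ℕ}
    (h : ∀ m < α, ∀ c : ℕ → K, (∀ j ≤ m, c j ∈ R) → (∃ j ≤ m, c j ≠ 0) →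
      ∑ j ∈ Finset.range (m + 1), c j * ξ ^ j ≠ 0) :
    LinearIndependent R fun j : Fin α ↦ ξ ^ (j : ℕ) := by
  refine Fintype.linearIndependent_iff.2 fun g hg i ↦ ?_
  by_contra hi
  have hα : α - 1 + 1 = α := Nat.sub_add_cancel (Nat.one_le_of_lt i.2)
  set δ : ℕ → K := fun j ↦ if hj : j < α then g ⟨j, hj⟩ else 0
  refine h (α - 1) (by omega) δ (fun j _ ↦ ?_) ⟨i, by omega, by simpa [δ] using hi⟩ ?_
  · simp only [δ]
    split_ifs
    exacts [(g _).2, R.zero_mem]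
  · rw [hα, ← Fin.sum_univ_eq_sum_range (fun j ↦ δ j * ξ ^ j)]
    simpa [δ, Subring.smul_def] using hg

section FractionSubfield

variable {A : Type*} [CommRing A] (G : Subring A)

theorem algebraMap_mem_adjoin_of_mem_closure {R : Type*} [CommRing R]
    [Algebra R (FractionRing A)]
    (hG : ∀ g ∈ G, algebraMap A (FractionRing A) g ∈ (algebraMap R (FractionRing A)).range)
    {x a : A} (ha : a ∈ Subring.closure (↑G ∪ {x})) :
    algebraMap A (FractionRing A) a ∈ Algebra.adjoin R {algebraMap A (FractionRing A) x} := by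
  refine (Subring.closure_le (t := (Algebra.adjoin R _).toSubring.comap _)).2 ?_ ha
  rintro b (hb | rfl)
  · obtain ⟨r, hr⟩ := hG b hb
    change algebraMap A _ b ∈ Algebra.adjoin R _
    rw [← hr]
    exact Subalgebra.algebraMap_mem _ r
  · exact Algebra.self_mem_adjoin_singleton R _

variable [IsDomain A]

theorem exists_mul_eq_of_mem_adjoin {x : A} {z : FractionRing A}
    (hz : z ∈ Algebra.adjoin (Subfield.closure (algebraMap A (FractionRing A) '' G))
      {algebraMap A (FractionRing A) x}) :
    ∃ a ∈ Subring.closure (↑G ∪ {x}), ∃ H ∈ G, H ≠ 0 ∧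
      algebraMap A (FractionRing A) H * z = algebraMap A (FractionRing A) a := by
  set φ := algebraMap A (FractionRing A)
  have hG : ∀ g ∈ G, g ∈ Subring.closure (↑G ∪ {x}) := fun g hg ↦
    Subring.subset_closure (Or.inl hg)
  induction hz using Algebra.adjoin_induction with
  | mem z hz =>
    rw [Set.mem_singleton_iff.1 hz]
    exact ⟨x, Subring.subset_closure (Or.inr rfl), 1, G.one_mem, one_ne_zero, by simp⟩
  | algebraMap l =>
    obtain ⟨_, hy, _, hw, hl⟩ := Subfield.mem_closure_iff.1 l.2
    rw [← Subring.coe_map, Subring.closure_eq] at hy hw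
    obtain ⟨g, hg, rfl⟩ := hy
    obtain ⟨h, hh, rfl⟩ := hw
    obtain rfl | h0 := eq_or_ne h 0
    · refine ⟨0, zero_mem _, 1, G.one_mem, one_ne_zero, ?_⟩
      change φ 1 * (l : FractionRing A) = φ 0
      simp [← hl]
    refine ⟨g, hG g hg, h, hh, h0, ?_⟩
    change φ h * (l : FractionRing A) = φ g
    rw [← hl, mul_div_cancel₀ _ ((map_ne_zero_iff φ (IsFractionRing.injective A _)).2 h0)]
  | add z w _ _ hz hw =>
    obtain ⟨a, ha, H, hH, H0, hz⟩ := hz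
    obtain ⟨b, hb, H', hH', H0', hw⟩ := hw
    refine ⟨a * H' + b * H, add_mem (mul_mem ha (hG H' hH')) (mul_mem hb (hG H hH)), H * H',
      mul_mem hH hH', mul_ne_zero H0 H0', ?_⟩
    simp only [map_add, map_mul, ← hz, ← hw]
    ring
  | mul z w _ _ hz hw =>
    obtain ⟨a, ha, H, hH, H0, hz⟩ := hz
    obtain ⟨b, hb, H', hH', H0', hw⟩ := hw
    refine ⟨a * b, mul_mem ha hb, H * H', mul_mem hH hH', mul_ne_zero H0 H0', ?_⟩
    simp only [map_mul, ← hz, ← hw]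
    ring

theorem exists_mul_eq_of_isIntegral {x h : A}
    (hx : IsIntegral (Subfield.closure (algebraMap A (FractionRing A) '' G))
      (algebraMap A (FractionRing A) x))
    (hh : h ∈ Subring.closure (↑G ∪ {x})) (h0 : h ≠ 0) :
    ∃ a ∈ Subring.closure (↑G ∪ {x}), ∃ H ∈ G, H ≠ 0 ∧ h * a = H := by
  set L := Subfield.closure (algebraMap A (FractionRing A) '' G)
  have hmem : algebraMap A (FractionRing A) h ∈ Algebra.adjoin L {algebraMap A _ x} :=
    algebraMap_mem_adjoin_of_mem_closure G
      (fun g hg ↦ ⟨⟨_, Subfield.subset_closure ⟨g, hg, rfl⟩⟩, rfl⟩) hh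
  have hinv := (IsIntegral.of_mem_of_fg _ hx.fg_adjoin_singleton _ hmem).inv_mem hmem
  obtain ⟨a, ha, H, hH, H0, hHa⟩ := exists_mul_eq_of_mem_adjoin G hinv
  refine ⟨a, ha, H, hH, H0, IsFractionRing.injective A (FractionRing A) ?_⟩
  rw [map_mul, ← hHa]
  field_simp [(map_ne_zero_iff _ (IsFractionRing.injective A (FractionRing A))).2 h0]

end FractionSubfield

section Graded

variable {ι A : Type*} [AddMonoid ι] [DecidableEq ι] [CommRing A]
  (𝒜 : ι → AddSubgroup A) [GradedRing 𝒜]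

theorem isHomogeneous_subringClosure {s : Set A}
    (hs : ∀ i ⦃a⦄, a ∈ s → (decompose 𝒜 a i : A) ∈ s) :
    SetLike.IsHomogeneous 𝒜 (Subring.closure s) := fun i a ha ↦ by
  classical
  induction ha using Subring.closure_induction generalizing i with
  | mem _ ha => exact Subring.subset_closure (hs i ha)
  | zero => simp
  | one =>
    obtain rfl | hi := eq_or_ne i 0
    · rw [decompose_of_mem_same 𝒜 SetLike.GradedOne.one_mem]
      exact one_mem _
    · rw [decompose_of_mem_ne 𝒜 SetLike.GradedOne.one_mem hi.symm]
      exact zero_mem _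
  | add _ _ _ _ ha hb => simpa using add_mem (ha i) (hb i)
  | neg _ _ ha =>
    rw [decompose_neg]
    exact neg_mem (ha i)
  | mul _ _ _ _ ha hb =>
    rw [decompose_mul, coe_mul_apply]
    exact sum_mem fun ij _ ↦ mul_mem (ha ij.1) (hb ij.2)

theorem exists_decompose_ne_zero {a : A} (ha : a ≠ 0) : ∃ i, (decompose 𝒜 a i : A) ≠ 0 := by
  classical
  by_contra! h
  exact ha (by rw [← sum_support_decompose 𝒜 a]; exact Finset.sum_eq_zero fun i _ ↦ h i)

theorem isHomogeneous_closure_union_singleton {G : Subring A} (hG : SetLike.IsHomogeneous 𝒜 G)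
    {x : A} {d : ι} (hx : x ∈ 𝒜 d) : SetLike.IsHomogeneous 𝒜 (Subring.closure (↑G ∪ {x})) := by
  refine isHomogeneous_subringClosure 𝒜 ?_
  rintro i b (hb | rfl)
  · exact Or.inl (hG i hb)
  · obtain rfl | hi := eq_or_ne d i
    · rw [decompose_of_mem_same 𝒜 hx]
      exact Or.inr rfl
    · rw [decompose_of_mem_ne 𝒜 hx hi]
      exact Or.inl G.zero_mem

variable [IsDomain A]

def Subring.homogeneousSaturation (G : Subring A) : Subring (FractionRing A) where
  carrier := {c | ∃ g h : A, g ∈ G ∧ h ∈ G ∧ SetLike.IsHomogeneousElem 𝒜 h ∧ h ≠ 0 ∧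
    c = algebraMap A (FractionRing A) g / algebraMap A (FractionRing A) h}
  zero_mem' :=
    ⟨0, 1, G.zero_mem, G.one_mem, SetLike.isHomogeneousElem_one 𝒜, one_ne_zero, by simp⟩
  one_mem' :=
    ⟨1, 1, G.one_mem, G.one_mem, SetLike.isHomogeneousElem_one 𝒜, one_ne_zero, by simp⟩
  add_mem' := by
    rintro _ _ ⟨g, h, hg, hh, hhom, h0, rfl⟩ ⟨g', h', hg', hh', hhom', h0', rfl⟩
    refine ⟨g * h' + g' * h, h * h', add_mem (mul_mem hg hh') (mul_mem hg' hh), mul_mem hh hh',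
      hhom.mul hhom', mul_ne_zero h0 h0', ?_⟩
    rw [div_add_div _ _ (mt IsFractionRing.to_map_eq_zero_iff.1 h0)
      (mt IsFractionRing.to_map_eq_zero_iff.1 h0')]
    simp [mul_comm]
  neg_mem' := by
    rintro _ ⟨g, h, hg, hh, hhom, h0, rfl⟩
    exact ⟨-g, h, neg_mem hg, hh, hhom, h0, by rw [map_neg, neg_div]⟩
  mul_mem' := by
    rintro _ _ ⟨g, h, hg, hh, hhom, h0, rfl⟩ ⟨g', h', hg', hh', hhom', h0', rfl⟩
    exact ⟨g * g', h * h', mul_mem hg hg', mul_mem hh hh', hhom.mul hhom', mul_ne_zero h0 h0',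
      by rw [map_mul, map_mul, div_mul_div_comm]⟩

theorem algebraMap_mem_homogeneousSaturation {G : Subring A} {g : A} (hg : g ∈ G) :
    algebraMap A (FractionRing A) g ∈ G.homogeneousSaturation 𝒜 :=
  ⟨g, 1, hg, G.one_mem, SetLike.isHomogeneousElem_one 𝒜, one_ne_zero, by simp⟩

theorem homogeneousSaturation_le_closure (G : Subring A) :
    G.homogeneousSaturation 𝒜 ≤
      (Subfield.closure (algebraMap A (FractionRing A) '' G)).toSubring := by
  rintro _ ⟨g, h, hg, hh, -, -, rfl⟩
  exact Subfield.div_mem _ (Subfield.subset_closure ⟨g, hg, rfl⟩)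
    (Subfield.subset_closure ⟨h, hh, rfl⟩)

theorem algebraMap_mem_adjoin_homogeneousSaturation {G : Subring A} {x a : A}
    (ha : a ∈ Subring.closure (↑G ∪ {x})) :
    algebraMap A (FractionRing A) a ∈
      Algebra.adjoin (G.homogeneousSaturation 𝒜) {algebraMap A (FractionRing A) x} :=
  algebraMap_mem_adjoin_of_mem_closure G
    (fun _ hg ↦ ⟨⟨_, algebraMap_mem_homogeneousSaturation 𝒜 hg⟩, rfl⟩) ha

end Graded

section Inverse

variable {ι A : Type*} [AddCommGroup ι] [DecidableEq ι] [CommRing A] [IsDomain A]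
  (𝒜 : ι → AddSubgroup A) [GradedRing 𝒜] {G : Subring A}

theorem inv_mem_adjoin_homogeneousSaturation (hG : SetLike.IsHomogeneous 𝒜 G) {x : A} {d : ι}
    (hx : x ∈ 𝒜 d)
    (hint : IsIntegral (Subfield.closure (algebraMap A (FractionRing A) '' G))
      (algebraMap A (FractionRing A) x))
    {h : A} (hh : h ∈ Subring.closure (↑G ∪ {x})) (hhom : SetLike.IsHomogeneousElem 𝒜 h)
    (h0 : h ≠ 0) :
    (algebraMap A (FractionRing A) h)⁻¹ ∈
      Algebra.adjoin (G.homogeneousSaturation 𝒜) {algebraMap A (FractionRing A) x} := by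
  obtain ⟨f, hf⟩ := hhom
  obtain ⟨a, ha, H, hH, H0, rfl⟩ := exists_mul_eq_of_isIntegral G hint hh h0
  obtain ⟨e, he⟩ := exists_decompose_ne_zero 𝒜 H0
  have hcomp : (decompose 𝒜 (h * a) e : A) = h * decompose 𝒜 a (e - f) := by
    rw [← coe_decompose_mul_add_of_left_mem 𝒜 hf, add_sub_cancel]
  have hinv : (algebraMap A (FractionRing A) h)⁻¹ =
      algebraMap A _ (decompose 𝒜 a (e - f)) * (algebraMap A _ (decompose 𝒜 (h * a) e))⁻¹ := by
    have ha0 : (decompose 𝒜 a (e - f) : A) ≠ 0 := right_ne_zero_of_mul (hcomp ▸ he)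
    rw [hcomp, map_mul]
    field_simp [IsFractionRing.to_map_eq_zero_iff, ha0]
  have hden : (algebraMap A (FractionRing A) (decompose 𝒜 (h * a) e))⁻¹ ∈
      G.homogeneousSaturation 𝒜 :=
    ⟨1, _, G.one_mem, hG e hH, ⟨e, SetLike.coe_mem _⟩, he, by simp⟩
  rw [hinv]
  exact mul_mem
    (algebraMap_mem_adjoin_homogeneousSaturation 𝒜
      (isHomogeneous_closure_union_singleton 𝒜 hG hx _ ha))
    (Subalgebra.algebraMap_mem _ (⟨_, hden⟩ : G.homogeneousSaturation 𝒜))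

end Inverse

theorem stmt2_general {ι : Type*} [AddCommGroup ι] [DecidableEq ι]
    {A : Type*} [CommRing A] [IsDomain A]
    (𝒜 : ι → AddSubgroup A) [GradedRing 𝒜]
    (G : Subring A) (hG : ∀ a ∈ G, ∀ d : ι, (DirectSum.decompose 𝒜 a d : A) ∈ G)
    (x : A) (d : ι) (hx : x ∈ 𝒜 d)
    (α : ℕ)
    -- homogeneous integral relation of degree `α` over `G*`
    (hrel : ∃ c : ℕ → FractionRing A,
      (∀ j < α, ∃ g h : A, g ∈ G ∧ h ∈ G ∧ h ≠ 0 ∧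
        (∃ e : ι, h ∈ 𝒜 e ∧ g ∈ 𝒜 (e + (α - j) • d)) ∧
        c j = algebraMap A (FractionRing A) g / algebraMap A (FractionRing A) h) ∧
      (algebraMap A (FractionRing A) x) ^ α
        + ∑ j ∈ Finset.range α, c j * (algebraMap A (FractionRing A) x) ^ j = 0)
    -- no algebraic relation of degree `< α` over `G*`
    (hmin : ∀ m < α, ∀ c : ℕ → FractionRing A,
      (∀ j ≤ m, ∃ g h : A, g ∈ G ∧ h ∈ G ∧ (∃ e, h ∈ 𝒜 e) ∧ h ≠ 0 ∧
        c j = algebraMap A (FractionRing A) g / algebraMap A (FractionRing A) h) →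
      (∃ j ≤ m, c j ≠ 0) →
      ∑ j ∈ Finset.range (m + 1), c j * (algebraMap A (FractionRing A) x) ^ j ≠ 0) :
    ∀ y : FractionRing A,
      (∃ g h : A, g ∈ Subring.closure (↑G ∪ {x}) ∧ h ∈ Subring.closure (↑G ∪ {x}) ∧
        (∃ e, h ∈ 𝒜 e) ∧ h ≠ 0 ∧
        y = algebraMap A (FractionRing A) g / algebraMap A (FractionRing A) h) →
      ∃! c : Fin α → FractionRing A,
        (∀ j, ∃ g h : A, g ∈ G ∧ h ∈ G ∧ (∃ e, h ∈ 𝒜 e) ∧ h ≠ 0 ∧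
          c j = algebraMap A (FractionRing A) g / algebraMap A (FractionRing A) h) ∧
        y = ∑ j : Fin α, c j * (algebraMap A (FractionRing A) x) ^ (j : ℕ) := by
  rintro _ ⟨g, h, hg, hh, hhom, h0, rfl⟩
  obtain ⟨c, hc, hξ⟩ := hrel
  set R := G.homogeneousSaturation 𝒜
  have hcR : ∀ j < α, c j ∈ R := fun j hj ↦ by
    obtain ⟨g, h, hg, hh, h0, ⟨e, he, -⟩, hcj⟩ := hc j hj
    exact ⟨g, h, hg, hh, ⟨e, he⟩, h0, hcj⟩
  have hint : IsIntegral (Subfield.closure (algebraMap A (FractionRing A) '' G))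
      (algebraMap A (FractionRing A) x) :=
    isIntegral_of_monic_relation
      (fun j hj ↦ ⟨⟨c j, homogeneousSaturation_le_closure 𝒜 G (hcR j hj)⟩, rfl⟩) hξ
  have hy : algebraMap A (FractionRing A) g / algebraMap A (FractionRing A) h ∈
      Submodule.span R (Set.range fun j : Fin α ↦ algebraMap A (FractionRing A) x ^ (j : ℕ)) := by
    rw [← adjoin_singleton_eq_span_pow_of_monic_relation (fun j hj ↦ ⟨⟨c j, hcR j hj⟩, rfl⟩) hξ,
      Subalgebra.mem_toSubmodule, div_eq_mul_inv]
    exact mul_mem (algebraMap_mem_adjoin_homogeneousSaturation 𝒜 hg)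
      (inv_mem_adjoin_homogeneousSaturation 𝒜 (fun i a ha ↦ hG a ha i) hx hint hh hhom h0)
  obtain ⟨c', hc'⟩ := (Submodule.mem_span_range_iff_exists_fun R).1 hy
  refine ⟨fun j ↦ c' j, ⟨fun j ↦ (c' j).2, by simp [← hc', Subring.smul_def]⟩, ?_⟩
  rintro c'' ⟨hc'', hsum⟩
  funext j
  exact congrArg Subtype.val <| Fintype.linearIndependent_iffₛ.1
    (linearIndependent_pow_of_forall_sum_ne_zero R hmin) (fun j ↦ ⟨c'' j, hc'' j⟩) c'
    (by simpa [Subring.smul_def] using hsum.symm.trans hc'.symm) j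

/-- Suppose the homogeneous element `x ∈ A` satisfies a homogeneous integral relation of
degree `α` over the saturation `G*` and no algebraic relation of degree `< α` over `G*`.
Then every element of `(G[x])*` is uniquely a polynomial in `x` of degree `< α` with
coefficients in `G*`. -/
theorem stmt2 {ι : Type*} [AddCommGroup ι] [LinearOrder ι] [IsOrderedAddMonoid ι] [DecidableEq ι]
    {A : Type*} [CommRing A] [IsDomain A]
    (𝒜 : ι → AddSubgroup A) [GradedRing 𝒜]
    (G : Subring A) (hG : ∀ a ∈ G, ∀ d : ι, (DirectSum.decompose 𝒜 a d : A) ∈ G)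
    (x : A) (d : ι) (hx : x ∈ 𝒜 d)
    (α : ℕ) (hα : 0 < α)
    -- homogeneous integral relation of degree `α` over `G*`
    (hrel : ∃ c : ℕ → FractionRing A,
      (∀ j < α, ∃ g h : A, g ∈ G ∧ h ∈ G ∧ h ≠ 0 ∧
        (∃ e : ι, h ∈ 𝒜 e ∧ g ∈ 𝒜 (e + (α - j) • d)) ∧
        c j = algebraMap A (FractionRing A) g / algebraMap A (FractionRing A) h) ∧
      (algebraMap A (FractionRing A) x) ^ α
        + ∑ j ∈ Finset.range α, c j * (algebraMap A (FractionRing A) x) ^ j = 0)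
    -- no algebraic relation of degree `< α` over `G*`
    (hmin : ∀ m < α, ∀ c : ℕ → FractionRing A,
      (∀ j ≤ m, ∃ g h : A, g ∈ G ∧ h ∈ G ∧ (∃ e, h ∈ 𝒜 e) ∧ h ≠ 0 ∧
        c j = algebraMap A (FractionRing A) g / algebraMap A (FractionRing A) h) →
      (∃ j ≤ m, c j ≠ 0) →
      ∑ j ∈ Finset.range (m + 1), c j * (algebraMap A (FractionRing A) x) ^ j ≠ 0) :
    ∀ y : FractionRing A,
      (∃ g h : A, g ∈ Subring.closure (↑G ∪ {x}) ∧ h ∈ Subring.closure (↑G ∪ {x}) ∧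
        (∃ e, h ∈ 𝒜 e) ∧ h ≠ 0 ∧
        y = algebraMap A (FractionRing A) g / algebraMap A (FractionRing A) h) →
      ∃! c : Fin α → FractionRing A,
        (∀ j, ∃ g h : A, g ∈ G ∧ h ∈ G ∧ (∃ e, h ∈ 𝒜 e) ∧ h ≠ 0 ∧
          c j = algebraMap A (FractionRing A) g / algebraMap A (FractionRing A) h) ∧
        y = ∑ j : Fin α, c j * (algebraMap A (FractionRing A) x) ^ (j : ℕ) :=
  stmt2_general 𝒜 G hG x d hx α hrel hmin
end

section
/- Let f = Σ_{i=0}^{n} a_i X^i ∈ K[X] be the minimal polynomial of x over K, with ν a valuation of K such that ν(a_n) < ν(a_i) for all 0 ≤ i < n. Then for any extension ν' of ν to L = K(x), one has ν'(x) > 0. -/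
/-!
If `v x ≤ 0`, then for `i < n` every lower term of `x ^ n = -∑_{i<n} aᵢ xⁱ` has value
`v aᵢ + i • v x > i • v x ≥ n • v x = v (x ^ n)`, so the right-hand side has value
strictly larger than the left-hand side by the ultrametric inequality, a contradiction.
-/

open Polynomial Finset

section

variable {R Γ : Type*} [CommRing R] [AddCommGroup Γ] [LinearOrder Γ] [IsOrderedAddMonoid Γ]

theorem WithTop.nsmul_lt_add_nsmul_of_nonpos {γ a : WithTop Γ} (hγ : γ ≤ 0) (ha : 0 < a)
    {i n : ℕ} (hin : i ≤ n) : n • γ < a + i • γ := by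
  have hfin : i • γ ≠ ⊤ :=
    ne_top_of_le_ne_top WithTop.zero_ne_top (nsmul_nonpos hγ i)
  calc n • γ ≤ i • γ := nsmul_le_nsmul_left_of_nonpos hγ hin
    _ = 0 + i • γ := (zero_add _).symm
    _ < a + i • γ := WithTop.add_lt_add_right hfin ha

theorem AddValuation.pos_of_isRoot_of_monic (v : AddValuation R (WithTop Γ)) {p : R[X]}
    (hp : p.Monic) {x : R} (hx : p.IsRoot x) (hcoeff : ∀ i < p.natDegree, 0 < v (p.coeff i)) :
    0 < v x := by
  by_contra! hv
  set n := p.natDegree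
  have hxn : x ^ n = -∑ i ∈ range n, p.coeff i * x ^ i := by
    have := congrArg (eval x) hp.as_sum
    simp only [eval_add, eval_pow, eval_X, eval_finsetSum, eval_mul, eval_C, hx.eq_zero] at this
    linear_combination -this
  have hterm : ∀ i ∈ range n, n • v x < v (p.coeff i * x ^ i) := fun i hi => by
    rw [map_mul, map_pow]
    exact WithTop.nsmul_lt_add_nsmul_of_nonpos hv (hcoeff i (mem_range.1 hi)) (mem_range.1 hi).le
  have hlt := v.map_lt_sum
    (ne_top_of_le_ne_top WithTop.zero_ne_top (nsmul_nonpos hv n)) hterm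
  exact hlt.ne (by rw [← map_pow, hxn, map_neg])

end

/-- If the leading coefficient of the minimal polynomial of `x` has strictly smaller
value than all other coefficients, then `ν'(x) > 0` for any extension `ν'` of `ν`. -/
theorem stmt6 {K L : Type*} [Field K] [Field L] [Algebra K L]
    {Γ : Type*} [AddCommGroup Γ] [LinearOrder Γ] [IsOrderedAddMonoid Γ]
    (ν' : AddValuation L (WithTop Γ)) (x : L) (hx : IsIntegral K x)
    (hmin : ∀ i < (minpoly K x).natDegree,
      ν' (algebraMap K L ((minpoly K x).coeff (minpoly K x).natDegree))
        < ν' (algebraMap K L ((minpoly K x).coeff i))) :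
    0 < ν' x := by
  have hmonic := minpoly.monic hx
  refine ν'.pos_of_isRoot_of_monic (hmonic.map (algebraMap K L)) ?_ fun i hi => ?_
  · rw [IsRoot, eval_map_algebraMap, minpoly.aeval]
  · rw [hmonic.natDegree_map] at hi
    simpa [coeff_map, hmonic.coeff_natDegree] using hmin i hi
end
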